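/- Let λ ∈ Q^-, 𝔭 ∈ 𝒫(−λ), i ∈ I and w ∈ W with ℓ(ws_i) = ℓ(w) + 1. Then m(φ_i(𝔭), w) = m(𝔭, ws_i) + 1. -/

import Mathlib

open scoped Classical

noncomputable section

/-- An axiomatization of the root datum of a Kac--Moody algebra `𝔤` associated to an
`n × n` generalized Cartan matrix, realized on the lattice `V` of integral weights
(the subgroup of `𝔥*` spanned by the weight lattice `P`, the root lattice `Q` and a
Weyl vector).  `alpha i` are the simple roots, `pair i v = v(α_i^∨)` is the pairing
with the simple coroots, and `mult β = dim 𝔤_β` is the root multiplicity function.  -/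
structure KacMoody (n : ℕ) (V : Type) [AddCommGroup V] where
  /-- the simple roots `α_i` -/
  alpha : Fin n → V
  /-- the pairing with the simple coroots, `pair i v = v(α_i^∨)` -/
  pair : Fin n → V →+ ℤ
  /-- the diagonal entries of the generalized Cartan matrix `a_{ij} = pair i (alpha j)` are `2` -/
  pair_self : ∀ i, pair i (alpha i) = 2
  /-- the off-diagonal entries of the generalized Cartan matrix are nonpositive -/
  pair_offdiag : ∀ i j, i ≠ j → pair i (alpha j) ≤ 0
  /-- `a_{ij} = 0 → a_{ji} = 0` -/
  pair_zero_iff : ∀ i j, pair i (alpha j) = 0 → pair j (alpha i) = 0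
  /-- the simple roots are linearly independent -/
  indep : ∀ c : Fin n → ℤ, ∑ i, c i • alpha i = 0 → ∀ i, c i = 0
  /-- root multiplicities: `mult β = dim 𝔤_β`; `β ≠ 0` is a root iff `mult β ≠ 0` -/
  mult : V → ℕ
  /-- simple roots are roots of multiplicity one -/
  mult_simple : ∀ i, mult (alpha i) = 1
  /-- every root is positive or negative -/
  root_pm : ∀ β : V, mult β ≠ 0 → β ≠ 0 →
    (∃ c : Fin n → ℕ, β = ∑ i, c i • alpha i) ∨ (∃ c : Fin n → ℕ, β = -∑ i, c i • alpha i)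
  /-- multiplicities are invariant under the simple reflections (hence under the Weyl group) -/
  mult_reflect : ∀ (i) (v : V), mult (v - pair i v • alpha i) = mult v
  /-- a given `μ` admits only finitely many partitions into positive roots (counted
  with multiplicity); this is automatic for genuine Kac--Moody root systems -/
  part_finite : ∀ μ : V,
    {p : Finset (V × ℕ) |
      (∀ x ∈ p, (mult x.1 ≠ 0 ∧ x.1 ≠ 0 ∧ x.1 ∈ {v : V | ∃ c : Fin n → ℕ,
          v = ∑ i, c i • alpha i}) ∧ 1 ≤ x.2 ∧ x.2 ≤ mult x.1) ∧
        ∑ x ∈ p, x.1 = μ}.Finite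

/-- the multiplicative group structure on `AddAut A` (composition), as in older Mathlib -/
instance AddAut.groupOld (A : Type*) [Add A] : Group (AddAut A) where
  mul g h := AddEquiv.trans h g
  one := AddEquiv.refl _
  inv := AddEquiv.symm
  mul_assoc _ _ _ := rfl
  one_mul _ := rfl
  mul_one _ := rfl
  inv_mul_cancel e := by ext x; exact e.symm_apply_apply x

namespace KacMoody

variable {n : ℕ} {V : Type} [AddCommGroup V] (K : KacMoody n V)

/-- the positive root cone `Q⁺` (the `ℕ`-span of the simple roots) -/
def QP : Set V := {v | ∃ c : Fin n → ℕ, v = ∑ i, c i • K.alpha i}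

/-- `β` is a positive root of `𝔤` -/
def IsPosRoot (β : V) : Prop := K.mult β ≠ 0 ∧ β ≠ 0 ∧ β ∈ K.QP

/-- the underlying function of the simple reflection `s_i` -/
def sAux (i : Fin n) : V → V := fun v => v - K.pair i v • K.alpha i

lemma sAux_add (i : Fin n) (a b : V) : K.sAux i (a + b) = K.sAux i a + K.sAux i b := by
  simp only [sAux, map_add, add_smul]; abel

lemma sAux_invol (i : Fin n) : Function.Involutive (K.sAux i) := by
  intro v
  simp only [sAux, map_sub, map_zsmul, K.pair_self i, smul_eq_mul]
  have h2 : K.pair i v - K.pair i v * 2 = -(K.pair i v) := by ring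
  rw [h2, neg_smul, sub_neg_eq_add]
  abel

/-- the simple reflection `s_i`, as an automorphism of the weight lattice -/
def s (i : Fin n) : AddAut V :=
  { toFun := K.sAux i
    invFun := K.sAux i
    left_inv := K.sAux_invol i
    right_inv := K.sAux_invol i
    map_add' := K.sAux_add i }

/-- the Weyl group `W` of `𝔤`, realized as the subgroup of `Aut(𝔥*)` generated by the
simple reflections -/
def Wgrp : Subgroup (AddAut V) := Subgroup.closure (Set.range K.s)

/-- the length `ℓ(w)` of an element of the Weyl group: the minimal length of an
expression of `w` as a product of simple reflections -/
def len (w : AddAut V) : ℕ :=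
  sInf {k | ∃ l : List (Fin n), l.length = k ∧ (l.map K.s).prod = w}

/-- the set `P⁺` of dominant integral weights -/
def Pplus : Set V := {v | ∀ i, 0 ≤ K.pair i v}

/-- `β` is a real root: it is `W`-conjugate to a simple root -/
def IsRealRoot (β : V) : Prop := ∃ w ∈ K.Wgrp, ∃ i, w (K.alpha i) = β

/-- `β` is an imaginary root: a root that is not real -/
def IsImRoot (β : V) : Prop := K.mult β ≠ 0 ∧ β ≠ 0 ∧ ¬K.IsRealRoot β

/-- the cone `Q⁻_im` generated by the negative imaginary roots -/
def coneIm : Set V :=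
  (AddSubmonoid.closure {v : V | K.IsImRoot v ∧ -v ∈ K.QP} : AddSubmonoid V)

/-- the element of `Q⁺` with coordinates `c` in the basis of simple roots -/
def toV (c : Fin n →₀ ℕ) : V := ∑ i, c i • K.alpha i

/-- the coordinates of an element of `Q⁺` in the basis of simple roots -/
def coordOf (v : V) : Fin n →₀ ℕ :=
  if h : ∃ c : Fin n →₀ ℕ, K.toV c = v then h.choose else 0

/-- `p` is an admissible partition of `μ`: a finite subset of
`𝒫 = {(α, i) : α ∈ Φ⁺, 1 ≤ i ≤ mult α}` whose parts sum to `μ` -/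
def IsPart (μ : V) (p : Finset (V × ℕ)) : Prop :=
  (∀ x ∈ p, (K.mult x.1 ≠ 0 ∧ x.1 ≠ 0 ∧ x.1 ∈ K.QP) ∧ 1 ≤ x.2 ∧ x.2 ≤ K.mult x.1) ∧
    ∑ x ∈ p, x.1 = μ

lemma isPart_finite (μ : V) : {p : Finset (V × ℕ) | K.IsPart μ p}.Finite := K.part_finite μ

/-- the finite set `𝒫(μ)` of admissible partitions of `μ` -/
def partsFinset (μ : V) : Finset (Finset (V × ℕ)) := (K.isPart_finite μ).toFinset

/-- the Kim--Lee function `H(μ; q) = Σ_{𝔭 ∈ 𝒫(μ)} (-q)^{|𝔭|}`, i.e. the coefficient of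
`e^{-μ}` in `Π_{α ∈ Φ⁺} (1 - q e^{-α})^{mult α}` -/
def H (μ : V) : Polynomial ℤ := ∑ p ∈ K.partsFinset μ, (-Polynomial.X) ^ p.card

/-- the Weyl denominator `Π_{α ∈ Φ⁺} (1 - e^{-α})^{mult α}`, expanded as a formal sum;
the coefficient at `c` is the coefficient of `e^{-toV c}` -/
def den : MvPowerSeries (Fin n) ℤ :=
  fun c => ∑ p ∈ K.partsFinset (K.toV c), (-1 : ℤ) ^ p.card

/-- `ξ^λ = Σ_{w ∈ W} (-1)^{ℓ(w)} e^{w∘λ}` as a formal sum supported on `Q⁻`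
(for `λ ∈ Q'`); the coefficient at `c` is the coefficient of `e^{-toV c}` -/
def xiMv (ρ lam : V) : MvPowerSeries (Fin n) ℤ :=
  fun c => ∑ᶠ w ∈ {w : AddAut V | w ∈ K.Wgrp ∧ w (lam + ρ) - ρ = -K.toV c},
    (-1 : ℤ) ^ K.len w

/-- the Poincaré series `χ(q) = Σ_{w ∈ W} q^{ℓ(w)}` of the Weyl group -/
def chiPS : PowerSeries ℤ :=
  PowerSeries.mk fun k => (Nat.card {w : AddAut V | w ∈ K.Wgrp ∧ K.len w = k} : ℤ)

/-- the inversion set `Φ(w⁻¹) = {α ∈ Φ⁺ : wα < 0}` -/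
def Inversions (w : AddAut V) : Set V := {β | K.IsPosRoot β ∧ -(w β) ∈ K.QP}

/-- the number of inversions of `w`, counted with multiplicity -/
def NInv (w : AddAut V) : ℕ := ∑ᶠ β ∈ K.Inversions w, K.mult β

/-- a finite subset of `𝒫 = {(α, i) : α ∈ Φ⁺, 1 ≤ i ≤ mult α}` -/
def IsChoice (p : Finset (V × ℕ)) : Prop :=
  ∀ x ∈ p, K.IsPosRoot x.1 ∧ 1 ≤ x.2 ∧ x.2 ≤ K.mult x.1

/-- the formal sum expansion of `Δ^w`, the image of
`Δ = Π_{α ∈ Φ⁺} ((1 - q e^{-α})/(1 - e^{-α}))^{mult α}` under `w ∈ W`: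
`Δ^w = Π_{α ∈ Φ(w⁻¹)} ((q - e^{-α})/(1 - e^{-α})) ·
Π_{α ∈ Φ⁺ ∖ Φ(w⁻¹)} ((1 - q e^{-α})/(1 - e^{-α}))^{mult α}`, where numerators are
expanded by choosing a finite subset `pf.1` of `𝒫` and denominators by choosing a
finitely supported multiset `pf.2` on `𝒫`. -/
def deltaW (w : AddAut V) : MvPowerSeries (Fin n) (PowerSeries ℤ) :=
  fun c =>
    ∑ᶠ pf ∈ {pf : Finset (V × ℕ) × ((V × ℕ) →₀ ℕ) |
        K.IsChoice pf.1 ∧ (∀ x ∈ pf.2.support, K.IsPosRoot x.1 ∧ 1 ≤ x.2 ∧ x.2 ≤ K.mult x.1) ∧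
        (∑ x ∈ pf.1, x.1) + (pf.2.sum fun x k => k • x.1) = K.toV c},
      ((-1 : ℤ) ^ pf.1.card) •
        (PowerSeries.X : PowerSeries ℤ) ^
          (K.NInv w + (pf.1.filter fun x => x.1 ∉ K.Inversions w).card
            - (pf.1.filter fun x => x.1 ∈ K.Inversions w).card)

/-- the formal sum `ℳ(q) = Σ_{w ∈ W} Δ^w`, a formal sum supported on `Q⁻` with
coefficients in `ℤ[[q]]`; the coefficient at `c` is the coefficient of `e^{-toV c}` -/
def Mcal : MvPowerSeries (Fin n) (PowerSeries ℤ) :=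
  fun c => PowerSeries.mk fun m =>
    ∑ᶠ w ∈ {w : AddAut V | w ∈ K.Wgrp},
      PowerSeries.coeff m (MvPowerSeries.coeff c (K.deltaW w))

/-- `Q' = ⋂_{w ∈ W} w ∘ Q⁻`, where `∘` is the circle (dot) action `w ∘ λ = w(λ+ρ) - ρ` -/
def Qprime (ρ : V) : Set V := {v | ∀ w ∈ K.Wgrp, -(w (v + ρ) - ρ) ∈ K.QP}

/-- `ξ^λ = Σ_{w ∈ W} (-1)^{ℓ(w)} e^{w∘λ}` as a formal sum on all of `𝔥*`:
`xiFun ρ lam v` is the coefficient of `e^v` -/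
def xiFun (ρ lam : V) : V → ℤ :=
  fun v => ∑ᶠ w ∈ {w : AddAut V | w ∈ K.Wgrp ∧ w (lam + ρ) - ρ = v}, (-1 : ℤ) ^ K.len w

/-- the numerator `Σ_{w ∈ W} (-1)^{ℓ(w)} e^{w(λ+ρ)}` of `π^λ`, as a formal sum:
`numFun ρ lam v` is the coefficient of `e^v` -/
def numFun (ρ lam : V) : V → ℤ :=
  fun v => ∑ᶠ w ∈ {w : AddAut V | w ∈ K.Wgrp ∧ w (lam + ρ) = v}, (-1 : ℤ) ^ K.len w

/-- the map `φ_i : 𝒫(-λ) → 𝒫(-s_i ∘ λ)` on admissible partitions -/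
def phi (i : Fin n) (p : Finset (V × ℕ)) : Finset (V × ℕ) :=
  if ∃ x ∈ p, x.1 = K.alpha i then
    (p.filter fun x => x.1 ≠ K.alpha i).image fun x => (K.s i x.1, x.2)
  else insert (K.alpha i, 1) (p.image fun x => (K.s i x.1, x.2))

/-- `m(𝔭, w) = |𝔭| - 2 ⬝ #{(β, j) ∈ 𝔭 : wβ < 0}` -/
def mpw (w : AddAut V) (p : Finset (V × ℕ)) : ℤ :=
  (p.card : ℤ) - 2 * (p.filter fun x => -(w x.1) ∈ K.QP ∧ w x.1 ≠ 0).card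

/-- `|wβ|`: the positive root among `± wβ` -/
def wabs (w : AddAut V) (β : V) : V := if -(w β) ∈ K.QP then -(w β) else w β

/-- `Σ_{α ∈ Φ(w⁻¹)} mult α • (-wα)`, the forced monomial appearing when `w` acts on the
Weyl denominator -/
def invWt (w : AddAut V) : V := ∑ᶠ β ∈ K.Inversions w, K.mult β • (-(w β))

/-- the series part of the expansion of `w(Π_{α ∈ Φ⁺} (1 - e^{-α})^{mult α})`:
by the defining action `w(1 - e^{-α}) = 1 - e^{-wα}` if `wα > 0` and
`w(1 - e^{-α}) = (-e^{-wα})(1 - e^{wα})` if `wα < 0`, one has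
`w(Π_{α ∈ Φ⁺} (1 - e^{-α})^{mult α}) = (-1)^{NInv w} e^{invWt w} · wDen w`, where
`wDen w = Π_{α ∈ Φ⁺, (α,i) ∈ 𝒫} (1 - e^{-|wα|})`; the coefficient at `c` is the
coefficient of `e^{-toV c}` -/
def wDen (w : AddAut V) : MvPowerSeries (Fin n) ℤ :=
  fun c => ∑ᶠ p ∈ {p : Finset (V × ℕ) | K.IsChoice p ∧
      (∑ x ∈ p, K.wabs w x.1) = K.toV c},
    (-1 : ℤ) ^ p.card

/-- for a word `l = (i_1, …, i_ℓ)`, the root `s_{i_1} ⋯ s_{i_{k-1}} (α_{i_k})` -/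
def prefixRoot (l : List (Fin n)) (k : Fin l.length) : V :=
  ((l.take k).map K.s).prod (K.alpha (l.get k))

end KacMoody

/-!
The heart of the matter is the positivity of `w α_i` when `ℓ(w s_i) > ℓ(w)`, proved by the
argument for Coxeter groups in Humphreys, *Reflection groups and Coxeter groups*, §5.4, using
only the Cartan integers. By induction on `ℓ(w)`, let `s_t` be the last letter of a reduced
expression of `w`. Peel the alternating product `⋯ s_i s_t` of the dihedral group `⟨s_i, s_t⟩`
off the right of `w` for as long as the length drops, writing `w = u d`. Where this stops, `u`
sends both `α_i` and `α_t` to `Q⁺` by induction. Before `d` reaches the braid relation of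
`⟨s_i, s_t⟩`, which would shorten `w s_i`, the root `d α_i` is a nonnegative combination of
`α_i` and `α_t`.

Given this, `s_i` matches the parts of `𝔭` other than `α_i` with those of `φ_i(𝔭)`, and
`w s_i β < 0` if and only if `w (s_i β) < 0`. The only change is the part `(α_i; 1)`. If it
lies in `𝔭`, it counts negatively for `w s_i`, since `w s_i α_i = -w α_i < 0`. If not, it is
added by `φ_i` and counts positively for `w`.
-/

lemma AddAut.groupOld_mul_apply {A : Type*} [Add A] (u v : AddAut A) (x : A) :
    (u * v) x = u (v x) := rfl

namespace KacMoody

variable {n : ℕ} {V : Type} [AddCommGroup V] (K : KacMoody n V)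

lemma alpha_mem_QP (i : Fin n) : K.alpha i ∈ K.QP := by
  refine ⟨Pi.single i 1, ?_⟩
  simp [Pi.single_apply, ite_smul]

lemma add_mem_QP {x y : V} (hx : x ∈ K.QP) (hy : y ∈ K.QP) : x + y ∈ K.QP := by
  obtain ⟨c, rfl⟩ := hx
  obtain ⟨d, rfl⟩ := hy
  exact ⟨c + d, by simp [add_smul, Finset.sum_add_distrib]⟩

lemma zsmul_mem_QP {a : ℤ} (ha : 0 ≤ a) {x : V} (hx : x ∈ K.QP) : a • x ∈ K.QP := by
  lift a to ℕ using ha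
  obtain ⟨c, rfl⟩ := hx
  exact ⟨fun j => a * c j, by simp [Finset.smul_sum, mul_smul]⟩

lemma eq_zero_of_mem_QP_of_neg_mem_QP {x : V} (hx : x ∈ K.QP) (hnx : -x ∈ K.QP) : x = 0 := by
  obtain ⟨c, hc⟩ := hx
  obtain ⟨d, hd⟩ := hnx
  have hcd : ∑ j, ((c j : ℤ) + d j) • K.alpha j = 0 := by
    simp only [add_smul, Finset.sum_add_distrib, natCast_zsmul, ← hc, ← hd, add_neg_cancel]
  have hc0 : ∀ j, c j = 0 := fun j => by have := K.indep _ hcd j; omega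
  simp [hc, hc0]

lemma alpha_ne_zero (i : Fin n) : K.alpha i ≠ 0 := by
  intro h
  have := K.indep (Pi.single i 1) (by simp [Pi.single_apply, ite_smul, h]) i
  simp at this

lemma s_apply (i : Fin n) (v : V) : K.s i v = v - K.pair i v • K.alpha i := rfl

lemma s_s (i : Fin n) (v : V) : K.s i (K.s i v) = v := K.sAux_invol i v

lemma s_mul_self (i : Fin n) : K.s i * K.s i = 1 :=
  AddEquiv.ext (K.s_s i)

lemma s_alpha_self (i : Fin n) : K.s i (K.alpha i) = -K.alpha i := by
  rw [s_apply, K.pair_self]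
  module

lemma s_mem_Wgrp (i : Fin n) : K.s i ∈ K.Wgrp :=
  Subgroup.subset_closure ⟨i, rfl⟩

lemma exists_word {w : AddAut V} (hw : w ∈ K.Wgrp) :
    ∃ l : List (Fin n), (l.map K.s).prod = w := by
  induction hw using Subgroup.closure_induction_left with
  | one => exact ⟨[], rfl⟩
  | mul_left _ hx _ _ ih =>
    obtain ⟨i, rfl⟩ := hx
    obtain ⟨l, rfl⟩ := ih
    exact ⟨i :: l, rfl⟩
  | inv_mul_cancel _ hx _ _ ih =>
    obtain ⟨i, rfl⟩ := hx
    obtain ⟨l, rfl⟩ := ih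
    exact ⟨i :: l, by rw [inv_eq_of_mul_eq_one_left (K.s_mul_self i)]; rfl⟩

lemma len_le_length {w : AddAut V} {l : List (Fin n)} (h : (l.map K.s).prod = w) :
    K.len w ≤ l.length :=
  Nat.sInf_le ⟨l, rfl, h⟩

lemma exists_reduced_word {w : AddAut V} (hw : w ∈ K.Wgrp) :
    ∃ l : List (Fin n), l.length = K.len w ∧ (l.map K.s).prod = w := by
  obtain ⟨l, hl⟩ := K.exists_word hw
  exact Nat.sInf_mem (s := {k | ∃ l : List (Fin n), l.length = k ∧ (l.map K.s).prod = w})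
    ⟨l.length, l, rfl, hl⟩

lemma len_mul_le {u v : AddAut V} (hu : u ∈ K.Wgrp) (hv : v ∈ K.Wgrp) :
    K.len (u * v) ≤ K.len u + K.len v := by
  obtain ⟨l₁, hl₁, rfl⟩ := K.exists_reduced_word hu
  obtain ⟨l₂, hl₂, rfl⟩ := K.exists_reduced_word hv
  simpa [hl₁, hl₂] using K.len_le_length (l := l₁ ++ l₂) (by simp)

lemma len_s_le (i : Fin n) : K.len (K.s i) ≤ 1 :=
  K.len_le_length (l := [i]) (by simp)

lemma len_le_len_mul_s_add_one {w : AddAut V} (hw : w ∈ K.Wgrp) (i : Fin n) :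
    K.len w ≤ K.len (w * K.s i) + 1 := by
  have h := K.len_mul_le (mul_mem hw (K.s_mem_Wgrp i)) (K.s_mem_Wgrp i)
  rw [mul_assoc, K.s_mul_self, mul_one] at h
  linarith [K.len_s_le i]

lemma eq_one_or_exists_len_mul_s_succ_eq {w : AddAut V} (hw : w ∈ K.Wgrp) :
    w = 1 ∨ ∃ t, K.len (w * K.s t) + 1 = K.len w := by
  obtain ⟨l, hl, rfl⟩ := K.exists_reduced_word hw
  rcases l.eq_nil_or_concat with rfl | ⟨l', t, rfl⟩
  · exact Or.inl rfl
  · have hshort : K.len (((l'.concat t).map K.s).prod * K.s t) ≤ l'.length :=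
      K.len_le_length (by simp [mul_assoc, K.s_mul_self])
    have := K.len_le_len_mul_s_add_one hw t
    exact Or.inr ⟨t, by simp only [List.length_concat] at hl; omega⟩

/-- Coordinates of `(s_i s_t)^k α_i` (even `r = 2k`) and `s_t (s_i s_t)^k α_i` (odd `r`) in the
basis `α_i, α_t`, where `a = -a_{it}` and `b = -a_{ti}`. -/
def altCoeff (a b : ℤ) : ℕ → ℤ × ℤ
  | 0 => (1, 0)
  | r + 1 =>
    let c := altCoeff a b r
    if Even r then (c.1, b * c.1 - c.2) else (a * c.2 - c.1, c.2)

lemma altCoeff_nonneg_of_four_le {a b : ℤ} (ha : 0 ≤ a) (hb : 0 ≤ b) (hab : 4 ≤ a * b)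
    (r : ℕ) : 0 ≤ altCoeff a b r := by
  suffices h : ∀ r, (0 ≤ (altCoeff a b r).1 ∧ 0 ≤ (altCoeff a b r).2) ∧
      (Even r → a * (altCoeff a b r).2 ≤ 2 * (altCoeff a b r).1) ∧
      (¬ Even r → b * (altCoeff a b r).1 ≤ 2 * (altCoeff a b r).2) from Prod.le_def.2 (h r).1
  intro r
  induction r with
  | zero => simp [altCoeff]
  | succ r ih =>
    obtain ⟨⟨hx, hy⟩, hev, hodd⟩ := ih
    by_cases he : Even r
    · have h1 := mul_le_mul_of_nonneg_left (hev he) hb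
      have h2 := mul_le_mul_of_nonneg_right hab hy
      simp only [altCoeff, Nat.even_add_one, he, ↓reduceIte, not_true, false_imp_iff, true_and,
        not_false_iff, true_imp_iff]
      refine ⟨⟨hx, ?_⟩, ?_⟩ <;> nlinarith
    · have h1 := mul_le_mul_of_nonneg_left (hodd he) ha
      have h2 := mul_le_mul_of_nonneg_right hab hx
      simp only [altCoeff, Nat.even_add_one, he, ↓reduceIte, not_false_iff, true_imp_iff,
        not_true, false_imp_iff, and_true]
      refine ⟨⟨?_, hy⟩, ?_⟩ <;> nlinarith

def altLetter (x y : Fin n) (r : ℕ) : Fin n := if Even r then x else y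

/-- `altProd x y r = ⋯ s_x s_y s_x`, with `r` factors. -/
def altProd (x y : Fin n) : ℕ → AddAut V
  | 0 => 1
  | r + 1 => K.s (altLetter x y r) * altProd x y r

lemma altLetter_succ (x y : Fin n) (r : ℕ) : altLetter x y (r + 1) = altLetter y x r := by
  by_cases h : Even r <;> simp [altLetter, Nat.even_add_one, h]

lemma and_of_altLetter {P : Fin n → Prop} {x y : Fin n} {r : ℕ}
    (hxy : P (altLetter x y r)) (hyx : P (altLetter y x r)) : P x ∧ P y := by
  unfold altLetter at *
  split_ifs at * <;> exact ⟨‹_›, ‹_›⟩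

lemma altProd_one (x y : Fin n) : K.altProd x y 1 = K.s x := by
  simp [altProd, altLetter]

lemma altProd_succ_eq_mul_s (x y : Fin n) (r : ℕ) :
    K.altProd x y (r + 1) = K.altProd y x r * K.s x := by
  induction r with
  | zero => simp [altProd, altLetter]
  | succ r ih => rw [altProd, ih, altLetter_succ, altProd, mul_assoc]

lemma altProd_mem_Wgrp (x y : Fin n) (r : ℕ) : K.altProd x y r ∈ K.Wgrp := by
  induction r with
  | zero => exact one_mem _
  | succ r ih => exact mul_mem (K.s_mem_Wgrp _) ih

lemma len_altProd_le (x y : Fin n) (r : ℕ) : K.len (K.altProd x y r) ≤ r := by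
  induction r with
  | zero => exact (K.len_le_length (l := []) rfl)
  | succ r ih =>
    have := K.len_mul_le (K.s_mem_Wgrp (altLetter x y r)) (K.altProd_mem_Wgrp x y r)
    have := K.len_s_le (altLetter x y r)
    rw [altProd]
    omega

lemma altProd_apply_alpha (i t : Fin n) (r : ℕ) :
    K.altProd t i r (K.alpha i) =
      (altCoeff (-K.pair i (K.alpha t)) (-K.pair t (K.alpha i)) r).1 • K.alpha i +
        (altCoeff (-K.pair i (K.alpha t)) (-K.pair t (K.alpha i)) r).2 • K.alpha t := by
  induction r with
  | zero => simp [altProd, altCoeff]; rfl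
  | succ r ih =>
    rw [altProd, AddAut.groupOld_mul_apply, ih, altLetter]
    by_cases h : Even r <;>
      simp only [altCoeff, h, if_true, if_false, s_apply, map_add, map_zsmul, K.pair_self] <;>
      module

lemma cartan_rank_two_cases {i t : Fin n} (hit : i ≠ t) :
    4 ≤ K.pair i (K.alpha t) * K.pair t (K.alpha i) ∨
    (K.pair i (K.alpha t) = 0 ∧ K.pair t (K.alpha i) = 0) ∨
    (K.pair i (K.alpha t) = -1 ∧ K.pair t (K.alpha i) = -1) ∨
    (K.pair i (K.alpha t) = -1 ∧ K.pair t (K.alpha i) = -2) ∨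
    (K.pair i (K.alpha t) = -2 ∧ K.pair t (K.alpha i) = -1) ∨
    (K.pair i (K.alpha t) = -1 ∧ K.pair t (K.alpha i) = -3) ∨
    (K.pair i (K.alpha t) = -3 ∧ K.pair t (K.alpha i) = -1) := by
  have hp := K.pair_offdiag i t hit
  have hq := K.pair_offdiag t i hit.symm
  have hpq := K.pair_zero_iff i t
  have hqp := K.pair_zero_iff t i
  generalize K.pair i (K.alpha t) = p at *
  generalize K.pair t (K.alpha i) = q at *
  by_contra! h
  rcases hp.lt_or_eq with hp' | hp0
  · have hq' : q < 0 := lt_of_le_of_ne hq fun h0 => hp'.ne (hqp h0)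
    have : -3 ≤ p := by nlinarith
    have : -3 ≤ q := by nlinarith
    interval_cases p <;> interval_cases q <;> simp_all
  · simp_all

/-- `M` is the length of the braid relation of `⟨s_i, s_t⟩` (`2, 3, 4, 6` as
`a_{it} a_{ti} = 0, 1, 2, 3`); when `a_{it} a_{ti} ≥ 4` there is none, and `M` can be taken
beyond any bound `N`. -/
lemma exists_braid_bound {i t : Fin n} (hit : i ≠ t) (N : ℕ) :
    ∃ M, 0 < M ∧
      (∀ r < M, 0 ≤ altCoeff (-K.pair i (K.alpha t)) (-K.pair t (K.alpha i)) r) ∧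
      (K.altProd t i M = K.altProd i t M ∨ N < M) := by
  rcases K.cartan_rank_two_cases hit with h4 | ⟨hp, hq⟩ | ⟨hp, hq⟩ | ⟨hp, hq⟩ | ⟨hp, hq⟩ |
      ⟨hp, hq⟩ | ⟨hp, hq⟩
  · have hp := K.pair_offdiag i t hit
    have hq := K.pair_offdiag t i hit.symm
    exact ⟨N + 1, N.succ_pos, fun r _ => altCoeff_nonneg_of_four_le (by omega) (by omega)
      (by linarith) r, Or.inr N.lt_succ_self⟩
  all_goals rw [hp, hq]
  on_goal 1 => refine ⟨2, two_pos, by simp only [Prod.le_def]; decide, Or.inl ?_⟩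
  on_goal 2 => refine ⟨3, three_pos, by simp only [Prod.le_def]; decide, Or.inl ?_⟩
  on_goal 3 => refine ⟨4, four_pos, by simp only [Prod.le_def]; decide, Or.inl ?_⟩
  on_goal 4 => refine ⟨4, four_pos, by simp only [Prod.le_def]; decide, Or.inl ?_⟩
  on_goal 5 => refine ⟨6, by norm_num, by simp only [Prod.le_def]; decide, Or.inl ?_⟩
  on_goal 6 => refine ⟨6, by norm_num, by simp only [Prod.le_def]; decide, Or.inl ?_⟩
  all_goals
    ext v
    simp [altProd, altLetter, Nat.even_iff, AddAut.groupOld_mul_apply, s_apply, K.pair_self, hp, hq]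
    module

lemma apply_altProd_alpha_mem_QP {u : AddAut V} {i t : Fin n} {r : ℕ}
    (hi : u (K.alpha i) ∈ K.QP) (ht : u (K.alpha t) ∈ K.QP)
    (hr : 0 ≤ altCoeff (-K.pair i (K.alpha t)) (-K.pair t (K.alpha i)) r) :
    u (K.altProd t i r (K.alpha i)) ∈ K.QP := by
  obtain ⟨hr₁, hr₂⟩ := Prod.le_def.1 hr
  rw [altProd_apply_alpha, map_add, map_zsmul, map_zsmul]
  exact K.add_mem_QP (K.zsmul_mem_QP hr₁ hi) (K.zsmul_mem_QP hr₂ ht)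

section Descent

variable {K} {w : AddAut V} {i t : Fin n} {M : ℕ}
  (ih : ∀ v ∈ K.Wgrp, K.len v < K.len w → ∀ j, ¬K.len (v * K.s j) < K.len v →
    v (K.alpha j) ∈ K.QP)
  (hni : ¬K.len (w * K.s i) < K.len w)
  (hcoeff : ∀ r < M, 0 ≤ altCoeff (-K.pair i (K.alpha t)) (-K.pair t (K.alpha i)) r)
  (hM : K.altProd t i M = K.altProd i t M ∨ K.len w < M)

include hni hM in
lemma lt_of_descent {r : ℕ} {u : AddAut V} (hu : u ∈ K.Wgrp) (hrM : r + 1 ≤ M)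
    (hprod : u * K.altProd t i (r + 1) = w) (hlen : K.len u + (r + 1) = K.len w) :
    r + 1 < M := by
  refine lt_of_le_of_ne hrM fun hr => ?_
  rcases hM with hbraid | hM
  · have hws : w * K.s i = u * K.altProd t i r := by
      rw [← hprod, hr, hbraid, ← hr, altProd_succ_eq_mul_s, mul_assoc, mul_assoc,
        K.s_mul_self, mul_one]
    have := K.len_mul_le hu (K.altProd_mem_Wgrp t i r)
    have := K.len_altProd_le t i r
    rw [← hws] at *
    omega
  · omega

include ih hcoeff in
lemma apply_alpha_mem_QP_of_descent_stop {r : ℕ} {u : AddAut V} (hu : u ∈ K.Wgrp)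
    (hr : r + 1 < M) (hprod : u * K.altProd t i (r + 1) = w)
    (hlen : K.len u + (r + 1) = K.len w)
    (hstop : ¬K.len (u * K.s (altLetter t i (r + 1))) < K.len u) :
    w (K.alpha i) ∈ K.QP := by
  have hprev : ¬K.len (u * K.s (altLetter t i r)) < K.len u := by
    have hw : (u * K.s (altLetter t i r)) * K.altProd t i r = w := by
      rw [← hprod, altProd, mul_assoc]
    have hle := K.len_mul_le (mul_mem hu (K.s_mem_Wgrp (altLetter t i r)))
      (K.altProd_mem_Wgrp t i r)
    rw [hw] at hle
    have := K.len_altProd_le t i r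
    omega
  rw [altLetter_succ] at hstop
  obtain ⟨ht, hi⟩ := and_of_altLetter (P := fun j => u (K.alpha j) ∈ K.QP)
    (ih u hu (by omega) _ hprev) (ih u hu (by omega) _ hstop)
  rw [← hprod, AddAut.groupOld_mul_apply]
  exact K.apply_altProd_alpha_mem_QP hi ht (hcoeff _ hr)

include ih hni hcoeff hM in
lemma apply_alpha_mem_QP_of_descent (r : ℕ) (u : AddAut V) (hu : u ∈ K.Wgrp)
    (hrM : r + 1 ≤ M) (hprod : u * K.altProd t i (r + 1) = w)
    (hlen : K.len u + (r + 1) = K.len w) :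
    w (K.alpha i) ∈ K.QP := by
  have hr := lt_of_descent hni hM hu hrM hprod hlen
  by_cases hstep : K.len (u * K.s (altLetter t i (r + 1))) < K.len u
  · have := K.len_le_len_mul_s_add_one hu (altLetter t i (r + 1))
    refine apply_alpha_mem_QP_of_descent (r + 1) _
      (mul_mem hu (K.s_mem_Wgrp (altLetter t i (r + 1)))) hr ?_ (by omega)
    rw [altProd, ← mul_assoc, mul_assoc u, K.s_mul_self, mul_one, hprod]
  · exact apply_alpha_mem_QP_of_descent_stop ih hcoeff hu hr hprod hlen hstep
termination_by K.len u

end Descent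

theorem apply_alpha_mem_QP {w : AddAut V} (hw : w ∈ K.Wgrp) (i : Fin n)
    (hni : ¬K.len (w * K.s i) < K.len w) : w (K.alpha i) ∈ K.QP := by
  obtain rfl | ⟨t, ht⟩ := K.eq_one_or_exists_len_mul_s_succ_eq hw
  · exact K.alpha_mem_QP i
  have hit : i ≠ t := by rintro rfl; omega
  obtain ⟨M, hM0, hcoeff, hM⟩ := K.exists_braid_bound hit (K.len w)
  refine apply_alpha_mem_QP_of_descent (fun v hv _ j hj => apply_alpha_mem_QP hv j hj)
    hni hcoeff hM 0 (w * K.s t) (mul_mem hw (K.s_mem_Wgrp t)) hM0 ?_ (by omega)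
  rw [altProd_one, mul_assoc, K.s_mul_self, mul_one]
termination_by K.len w

lemma apply_alpha_pos {w : AddAut V} (hw : w ∈ K.Wgrp) {i : Fin n}
    (hlen : K.len (w * K.s i) = K.len w + 1) :
    w (K.alpha i) ∈ K.QP ∧ w (K.alpha i) ≠ 0 :=
  ⟨K.apply_alpha_mem_QP hw i (by omega), w.map_ne_zero_iff.2 (K.alpha_ne_zero i)⟩

lemma mpw_insert {w : AddAut V} {x : V × ℕ} {p : Finset (V × ℕ)} (hx : x ∉ p) :
    K.mpw w (insert x p) = K.mpw w p + if -(w x.1) ∈ K.QP ∧ w x.1 ≠ 0 then -1 else 1 := by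
  unfold mpw
  rw [Finset.filter_insert, Finset.card_insert_of_notMem hx]
  split_ifs
  · rw [Finset.card_insert_of_notMem fun h => hx (Finset.mem_of_mem_filter x h)]
    push_cast
    ring
  · push_cast
    ring

lemma mpw_image_s (w : AddAut V) (i : Fin n) (p : Finset (V × ℕ)) :
    K.mpw w (p.image fun x => (K.s i x.1, x.2)) = K.mpw (w * K.s i) p := by
  have hinj : Function.Injective fun x : V × ℕ => (K.s i x.1, x.2) :=
    Prod.map_injective.2 ⟨(K.s i).injective, Function.injective_id⟩
  unfold mpw
  rw [Finset.filter_image, Finset.card_image_of_injective _ hinj,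
    Finset.card_image_of_injective _ hinj]
  rfl

variable {K} in
lemma IsPart.eq_of_fst_eq_alpha {μ : V} {p : Finset (V × ℕ)} (hp : K.IsPart μ p) {x : V × ℕ}
    (hx : x ∈ p) {i : Fin n} (hxi : x.1 = K.alpha i) : x = (K.alpha i, 1) := by
  have := (hp.1 x hx).2
  rw [hxi, K.mult_simple] at this
  exact Prod.ext hxi (by omega)

variable {K} in
lemma IsPart.alpha_notMem_image_s {μ : V} {p : Finset (V × ℕ)} (hp : K.IsPart μ p)
    (i : Fin n) : (K.alpha i, 1) ∉ p.image fun x => (K.s i x.1, x.2) := by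
  simp only [Finset.mem_image, Prod.mk.injEq, not_exists, not_and]
  intro x hx hsx _
  obtain ⟨-, hx0, hxQ⟩ := (hp.1 x hx).1
  have hneg : x.1 = -K.alpha i := by rw [← K.s_s i x.1, hsx, K.s_alpha_self]
  refine hx0 (K.eq_zero_of_mem_QP_of_neg_mem_QP hxQ ?_)
  rw [hneg, neg_neg]
  exact K.alpha_mem_QP i

lemma phi_of_mem {μ : V} {p : Finset (V × ℕ)} (hp : K.IsPart μ p) {i : Fin n}
    (hi : (K.alpha i, 1) ∈ p) :
    K.phi i p = (p.erase (K.alpha i, 1)).image fun x => (K.s i x.1, x.2) := by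
  rw [phi, if_pos ⟨_, hi, rfl⟩]
  congr 1
  ext x
  simp only [Finset.mem_filter, Finset.mem_erase]
  exact ⟨fun ⟨hx, hne⟩ => ⟨fun h => hne (by rw [h]), hx⟩,
    fun ⟨hne, hx⟩ => ⟨hx, fun h => hne (hp.eq_of_fst_eq_alpha hx h)⟩⟩

lemma phi_of_notMem {μ : V} {p : Finset (V × ℕ)} (hp : K.IsPart μ p) {i : Fin n}
    (hi : (K.alpha i, 1) ∉ p) :
    K.phi i p = insert (K.alpha i, 1) (p.image fun x => (K.s i x.1, x.2)) := by
  rw [phi, if_neg]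
  rintro ⟨x, hx, hxi⟩
  exact hi (hp.eq_of_fst_eq_alpha hx hxi ▸ hx)

end KacMoody

open KacMoody in
/-- **Lemma (behaviour of `m(𝔭, w)` under `φ_i`).**
Let `λ ∈ Q⁻`, `𝔭 ∈ 𝒫(-λ)`, `i ∈ I` and `w ∈ W` with `ℓ(w s_i) = ℓ(w) + 1`.
Then `m(φ_i(𝔭), w) = m(𝔭, w s_i) + 1`. -/
theorem mpw_phi
    (n : ℕ) (V : Type) [AddCommGroup V] (K : KacMoody n V) :
    ∀ lam : V, -lam ∈ K.QP →
      ∀ p : Finset (V × ℕ), K.IsPart (-lam) p →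
        ∀ (i : Fin n), ∀ w ∈ K.Wgrp, K.len (w * K.s i) = K.len w + 1 →
          K.mpw w (K.phi i p) = K.mpw (w * K.s i) p + 1 := by
  intro lam _ p hp i w hw hlen
  obtain ⟨hpos, hne⟩ := K.apply_alpha_pos hw hlen
  have hws : (w * K.s i) (K.alpha i) = -w (K.alpha i) := by
    rw [AddAut.groupOld_mul_apply, K.s_alpha_self, map_neg]
  by_cases hi : (K.alpha i, 1) ∈ p
  · have herase := K.mpw_insert (w := w * K.s i) (Finset.notMem_erase (K.alpha i, 1) p)
    rw [Finset.insert_erase hi, if_pos (by rw [hws, neg_neg, neg_ne_zero]; exact ⟨hpos, hne⟩)]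
      at herase
    rw [K.phi_of_mem hp hi, mpw_image_s, herase]
    ring
  · have hnotneg : ¬(-(w (K.alpha i)) ∈ K.QP ∧ w (K.alpha i) ≠ 0) :=
      fun h => hne (K.eq_zero_of_mem_QP_of_neg_mem_QP hpos h.1)
    rw [K.phi_of_notMem hp hi, K.mpw_insert (hp.alpha_notMem_image_s i), if_neg hnotneg,
      mpw_image_s]
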